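/- arXiv:2506.24095 — 2 statements merged into one kernel-verified Lean document; each statement's English description precedes it below -/
import Mathlib

section
/- Let φ ∈ C[0,π], M₀ ∈ L²(0,π), and define M(x) = M₀(x)/(π−x). Then the function F(t) = ∫₀ᵗ M(t−ξ)·φ(ξ) dξ belongs to L²(0,π) and satisfies ‖F‖_{L²} ≤ 2·‖φ‖_{C[0,π]}·‖M₀‖_{L²}. -/
open MeasureTheory Real Set ENNReal

lemma refl_lint (g : ℝ → ℝ≥0∞) (t : ℝ) :
    ∫⁻ ξ in Set.Ioc 0 t, g (t - ξ) = ∫⁻ s in Set.Ico 0 t, g s := by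
  have h1 := (Measure.measurePreserving_sub_left volume t).setLIntegral_comp_emb
    (MeasurableEquiv.subLeft t).measurableEmbedding g (Set.Ioc 0 t)
  have himg : (fun ξ => t - ξ) '' Set.Ioc 0 t = Set.Ico 0 t := by
    ext x
    simp only [Set.mem_image, Set.mem_Ioc, Set.mem_Ico]
    constructor
    · rintro ⟨y, ⟨hy1, hy2⟩, rfl⟩; constructor <;> linarith
    · rintro ⟨h1, h2⟩; exact ⟨t - x, ⟨by linarith, by linarith⟩, by ring⟩
  rw [himg] at h1
  exact h1

lemma Q_bound {t : ℝ} (ht : t ∈ Set.Ioo 0 π) :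
    ∫⁻ s in Set.Ioo 0 t, ENNReal.ofReal ((π - s) ^ (-(3:ℝ)/2))
      ≤ ENNReal.ofReal (2 * (π - t) ^ (-(1:ℝ)/2)) := by
  obtain ⟨ht0, htπ⟩ := ht
  have hcont : ContinuousOn (fun s : ℝ => (π - s) ^ (-(3:ℝ)/2)) (Set.Icc 0 t) := by
    apply ContinuousOn.rpow_const (continuous_const.sub continuous_id).continuousOn
    intro x hx
    left
    simp only [Pi.sub_apply, id_eq]
    have : x ≤ t := hx.2
    nlinarith
  have hint : IntegrableOn (fun s : ℝ => (π - s) ^ (-(3:ℝ)/2)) (Set.Ioo 0 t) volume :=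
    (hcont.integrableOn_Icc).mono_set Set.Ioo_subset_Icc_self
  have hnn : 0 ≤ᵐ[volume.restrict (Set.Ioo 0 t)] fun s : ℝ => (π - s) ^ (-(3:ℝ)/2) := by
    refine (ae_restrict_mem measurableSet_Ioo).mono fun s hs => ?_
    exact Real.rpow_nonneg (by nlinarith [hs.2] : (0:ℝ) ≤ π - s) _
  rw [← ofReal_integral_eq_lintegral_ofReal hint hnn]
  apply ENNReal.ofReal_le_ofReal
  have heq : ∫ s in Set.Ioo 0 t, (π - s) ^ (-(3:ℝ)/2) = ∫ s in (0:ℝ)..t, (π - s) ^ (-(3:ℝ)/2) := by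
    rw [intervalIntegral.integral_of_le ht0.le, MeasureTheory.integral_Ioc_eq_integral_Ioo]
  rw [heq, intervalIntegral.integral_comp_sub_left (fun x : ℝ => x ^ (-(3:ℝ)/2)) π]
  rw [integral_rpow (Or.inr ⟨by norm_num, by
    intro h
    rcases Set.mem_uIcc.mp h with ⟨h1, h2⟩ | ⟨h1, h2⟩ <;> nlinarith⟩)]
  have h1 : (0:ℝ) < π - t := by linarith
  have h2 : (0:ℝ) ≤ π ^ (-(3:ℝ)/2 + 1) := Real.rpow_nonneg pi_pos.le _
  have h3 : (0:ℝ) ≤ (π - t) ^ (-(3:ℝ)/2 + 1) := Real.rpow_nonneg h1.le _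
  have h4 : (π - t) ^ (-(3:ℝ)/2 + 1) = (π - t) ^ (-(1:ℝ)/2) := by norm_num
  have h5 : π - 0 = π := by ring
  rw [h5]
  rw [h4] at h3 ⊢
  have : (π ^ (-(3:ℝ)/2 + 1) - (π - t) ^ (-(1:ℝ)/2)) / (-(3:ℝ)/2 + 1)
      = 2 * ((π - t) ^ (-(1:ℝ)/2) - π ^ (-(3:ℝ)/2 + 1)) := by ring
  rw [this]
  linarith [h2]

lemma W_int {s : ℝ} (hs : s ∈ Set.Ioo 0 π) :
    ∫⁻ t in Set.Ioo s π, ENNReal.ofReal (2 * (π - t) ^ (-(1:ℝ)/2))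
      = ENNReal.ofReal (4 * (π - s) ^ ((1:ℝ)/2)) := by
  obtain ⟨hs0, hsπ⟩ := hs
  have hii : IntervalIntegrable (fun t : ℝ => 2 * (π - t) ^ (-(1:ℝ)/2)) volume s π := by
    have h0 : IntervalIntegrable (fun x : ℝ => x ^ (-(1:ℝ)/2)) volume 0 (π - s) :=
      intervalIntegral.intervalIntegrable_rpow' (by norm_num)
    have h1 := (h0.comp_sub_left π).const_mul 2
    have e1 : π - 0 = π := by ring
    have e2 : π - (π - s) = s := by ring
    rw [e1, e2] at h1
    exact h1.symm
  have hint : IntegrableOn (fun t : ℝ => 2 * (π - t) ^ (-(1:ℝ)/2)) (Set.Ioo s π) volume := by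
    exact hii.1.mono_set Set.Ioo_subset_Ioc_self
  have hnn : 0 ≤ᵐ[volume.restrict (Set.Ioo s π)] fun t : ℝ => 2 * (π - t) ^ (-(1:ℝ)/2) := by
    refine (ae_restrict_mem measurableSet_Ioo).mono fun t htm => ?_
    have : (0:ℝ) ≤ π - t := by linarith [htm.2]
    positivity
  rw [← ofReal_integral_eq_lintegral_ofReal hint hnn]
  congr 1
  have heq : ∫ t in Set.Ioo s π, 2 * (π - t) ^ (-(1:ℝ)/2)
      = ∫ t in s..π, 2 * (π - t) ^ (-(1:ℝ)/2) := by
    rw [intervalIntegral.integral_of_le hsπ.le, MeasureTheory.integral_Ioc_eq_integral_Ioo]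
  rw [heq, intervalIntegral.integral_const_mul,
    intervalIntegral.integral_comp_sub_left (fun x : ℝ => x ^ (-(1:ℝ)/2)) π]
  have e3 : π - π = 0 := by ring
  rw [e3, integral_rpow (Or.inl (by norm_num))]
  rw [Real.zero_rpow (by norm_num)]
  have e4 : (-(1:ℝ)/2 + 1) = 1/2 := by norm_num
  rw [e4]
  have hps : (0:ℝ) < π - s := by linarith
  rw [show ((π-s) ^ ((1:ℝ)/2) - 0)/(1/2) = 2*(π-s)^((1:ℝ)/2) by ring]
  ring

lemma tonelli_block (W V : ℝ → ℝ≥0∞) (hW : Measurable W) (hV : Measurable V)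
    (hWt : ∀ t, W t ≠ ⊤) (hVs : ∀ s, V s ≠ ⊤) :
    ∫⁻ t in Set.Ioo 0 π, W t * ∫⁻ s in Set.Ioo 0 t, V s
      = ∫⁻ s in Set.Ioo 0 π, V s * ∫⁻ t in Set.Ioo s π, W t := by
  set A : Set (ℝ × ℝ) := {p : ℝ × ℝ | 0 < p.2 ∧ p.2 < p.1 ∧ p.1 < π} with hA
  have hAm : MeasurableSet A := by
    apply MeasurableSet.inter
    · exact measurableSet_lt measurable_const measurable_snd
    apply MeasurableSet.inter
    · exact measurableSet_lt measurable_snd measurable_fst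
    · exact measurableSet_lt measurable_fst measurable_const
  set G : ℝ → ℝ → ℝ≥0∞ := fun t s => A.indicator (fun p => W p.1 * V p.2) (t, s) with hG
  have hGm : AEMeasurable (Function.uncurry G) ((volume : Measure ℝ).prod volume) := by
    apply Measurable.aemeasurable
    have : Function.uncurry G = A.indicator (fun p => W p.1 * V p.2) := rfl
    rw [this]
    exact ((hW.comp measurable_fst).mul (hV.comp measurable_snd)).indicator hAm
  have L1 : ∀ t, ∫⁻ s, G t s = (Set.Ioo 0 π).indicator (fun t => W t * ∫⁻ s in Set.Ioo 0 t, V s) t := by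
    intro t
    by_cases ht : t ∈ Set.Ioo 0 π
    · rw [Set.indicator_of_mem ht]
      have : ∀ s, G t s = (Set.Ioo 0 t).indicator (fun s => W t * V s) s := by
        intro s
        simp only [hG, Set.indicator_apply, Set.mem_setOf_eq, Set.mem_Ioo, hA]
        by_cases h : 0 < s ∧ s < t
        · rw [if_pos ⟨h.1, h.2, ht.2⟩, if_pos h]
        · rw [if_neg (fun hh => h ⟨hh.1, hh.2.1⟩), if_neg h]
      simp_rw [this]
      rw [lintegral_indicator measurableSet_Ioo, lintegral_const_mul' _ _ (hWt t)]
    · rw [Set.indicator_of_notMem ht]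
      have : ∀ s, G t s = 0 := by
        intro s
        apply Set.indicator_of_notMem
        intro hmem
        exact ht ⟨lt_trans hmem.1 hmem.2.1, hmem.2.2⟩
      simp_rw [this, lintegral_zero]
  have L2 : ∀ s, ∫⁻ t, G t s = (Set.Ioo 0 π).indicator (fun s => V s * ∫⁻ t in Set.Ioo s π, W t) s := by
    intro s
    by_cases hs : s ∈ Set.Ioo 0 π
    · rw [Set.indicator_of_mem hs]
      have : ∀ t, G t s = (Set.Ioo s π).indicator (fun t => W t * V s) t := by
        intro t
        simp only [hG, Set.indicator_apply, Set.mem_setOf_eq, Set.mem_Ioo, hA]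
        by_cases h : s < t ∧ t < π
        · rw [if_pos ⟨hs.1, h.1, h.2⟩, if_pos h]
        · rw [if_neg (fun hh => h ⟨hh.2.1, hh.2.2⟩), if_neg h]
      simp_rw [this]
      rw [lintegral_indicator measurableSet_Ioo, lintegral_mul_const' _ _ (hVs s), mul_comm]
    · rw [Set.indicator_of_notMem hs]
      have : ∀ t, G t s = 0 := by
        intro t
        apply Set.indicator_of_notMem
        intro hmem
        exact hs ⟨hmem.1, lt_trans hmem.2.1 hmem.2.2⟩
      simp_rw [this, lintegral_zero]
  calc ∫⁻ t in Set.Ioo 0 π, W t * ∫⁻ s in Set.Ioo 0 t, V s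
      = ∫⁻ t, (Set.Ioo 0 π).indicator (fun t => W t * ∫⁻ s in Set.Ioo 0 t, V s) t := by
        rw [lintegral_indicator measurableSet_Ioo]
    _ = ∫⁻ t, ∫⁻ s, G t s := by simp_rw [L1]
    _ = ∫⁻ s, ∫⁻ t, G t s := lintegral_lintegral_swap hGm
    _ = ∫⁻ s, (Set.Ioo 0 π).indicator (fun s => V s * ∫⁻ t in Set.Ioo s π, W t) s := by simp_rw [L2]
    _ = ∫⁻ s in Set.Ioo 0 π, V s * ∫⁻ t in Set.Ioo s π, W t := by
        rw [lintegral_indicator measurableSet_Ioo]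

lemma F_meas (m ψ : ℝ → ℂ) (hm : Measurable m) (hψ : Measurable ψ) :
    AEStronglyMeasurable (fun t => ∫ ξ in (0:ℝ)..t, m (t-ξ) / ((π:ℂ) - ((t:ℝ)-ξ)) * ψ ξ)
      (volume.restrict (Set.Ioo 0 π)) := by
  set k : ℝ × ℝ → ℂ := fun p =>
    Set.indicator {q : ℝ × ℝ | 0 < q.2 ∧ q.2 ≤ q.1}
      (fun q => m (q.1 - q.2) / ((π:ℂ) - ((q.1:ℝ) - q.2)) * ψ q.2) p with hk
  have hkm : Measurable k := by
    apply Measurable.indicator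
    · apply Measurable.mul
      · apply Measurable.div
        · exact hm.comp (measurable_fst.sub measurable_snd)
        · exact measurable_const.sub
            ((Complex.measurable_ofReal.comp measurable_fst).sub
              (Complex.measurable_ofReal.comp measurable_snd))
      · exact hψ.comp measurable_snd
    · apply MeasurableSet.inter
      · exact measurableSet_lt measurable_const measurable_snd
      · exact measurableSet_le measurable_snd measurable_fst
  have hF' : StronglyMeasurable (fun t => ∫ ξ, k (t, ξ)) :=
    StronglyMeasurable.integral_prod_right (f := fun t ξ => k (t, ξ))
      hkm.stronglyMeasurable
  apply hF'.aestronglyMeasurable.congr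
  refine (ae_restrict_mem measurableSet_Ioo).mono fun t ht => ?_
  have h1 : ∫ ξ in (0:ℝ)..t, m (t-ξ) / ((π:ℂ) - ((t:ℝ)-ξ)) * ψ ξ
      = ∫ ξ in Set.Ioc 0 t, m (t-ξ) / ((π:ℂ) - ((t:ℝ)-ξ)) * ψ ξ :=
    intervalIntegral.integral_of_le ht.1.le
  have h2 : ∀ ξ, k (t, ξ)
      = (Set.Ioc 0 t).indicator (fun ξ => m (t-ξ) / ((π:ℂ) - ((t:ℝ)-ξ)) * ψ ξ) ξ := by
    intro ξ
    simp only [hk, Set.indicator_apply, Set.mem_setOf_eq, Set.mem_Ioc]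
  simp only [h2]
  rw [MeasureTheory.integral_indicator measurableSet_Ioc, ← h1]

lemma F_pointwise (m ψ : ℝ → ℂ) (C : ℝ) (hC : 0 ≤ C) (hψC : ∀ x, ‖ψ x‖ ≤ C)
    {t : ℝ} (ht : t ∈ Set.Ioo 0 π) :
    (‖∫ ξ in (0:ℝ)..t, m (t-ξ) / ((π:ℂ) - ((t:ℝ)-ξ)) * ψ ξ‖₊ : ℝ≥0∞)
      ≤ ENNReal.ofReal C *
        ∫⁻ s in Set.Ioo 0 t, (‖m s‖₊ : ℝ≥0∞) * ENNReal.ofReal ((π - s)⁻¹) := by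
  obtain ⟨ht0, htπ⟩ := ht
  rw [intervalIntegral.integral_of_le ht0.le]
  refine le_trans (enorm_integral_le_lintegral_enorm _) ?_
  have key : ∫⁻ ξ in Set.Ioc 0 t, (‖m (t-ξ) / ((π:ℂ) - ((t:ℝ)-ξ)) * ψ ξ‖₊ : ℝ≥0∞)
      ≤ ∫⁻ ξ in Set.Ioc 0 t,
          ENNReal.ofReal C * ((‖m (t-ξ)‖₊ : ℝ≥0∞) * ENNReal.ofReal ((π - (t-ξ))⁻¹)) := by
    refine lintegral_mono_ae ((ae_restrict_mem measurableSet_Ioc).mono fun ξ hξ => ?_)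
    obtain ⟨hξ0, hξt⟩ := hξ
    have hs0 : 0 ≤ t - ξ := by linarith
    have hsπ : t - ξ < π := by linarith
    have hπs : (0:ℝ) < π - (t - ξ) := by linarith
    have hcast : (π:ℂ) - ((t:ℝ) - ξ) = ((π - (t - ξ) : ℝ) : ℂ) := by push_cast; ring
    have hnorm : ‖m (t-ξ) / ((π:ℂ) - ((t:ℝ)-ξ)) * ψ ξ‖
        = ‖m (t-ξ)‖ * (π - (t-ξ))⁻¹ * ‖ψ ξ‖ := by
      rw [norm_mul, norm_div, hcast, Complex.norm_real, Real.norm_eq_abs,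
        abs_of_pos hπs, div_eq_mul_inv]
    rw [← enorm_eq_nnnorm, ← enorm_eq_nnnorm, ← ofReal_norm, ← ofReal_norm, hnorm]
    have hreal : ‖m (t-ξ)‖ * (π - (t-ξ))⁻¹ * ‖ψ ξ‖ ≤ C * (‖m (t-ξ)‖ * (π - (t-ξ))⁻¹) := by
      rw [mul_comm C _]
      exact mul_le_mul_of_nonneg_left (hψC ξ) (by positivity)
    refine le_trans (ENNReal.ofReal_le_ofReal hreal) ?_
    rw [ENNReal.ofReal_mul hC, ENNReal.ofReal_mul (norm_nonneg _)]
  refine le_trans key ?_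
  rw [lintegral_const_mul' _ _ ENNReal.ofReal_ne_top]
  apply mul_le_mul_right (le_of_eq ?_)
  have hrefl := refl_lint (fun s => (‖m s‖₊ : ℝ≥0∞) * ENNReal.ofReal ((π - s)⁻¹)) t
  rw [hrefl, Measure.restrict_congr_set Ioo_ae_eq_Ico.symm]

lemma CS_step (m : ℝ → ℂ) (hm : Measurable m) {t : ℝ} (ht : t ∈ Set.Ioo 0 π) :
    ∫⁻ s in Set.Ioo 0 t, (‖m s‖₊ : ℝ≥0∞) * ENNReal.ofReal ((π - s)⁻¹)
      ≤ (∫⁻ s in Set.Ioo 0 t,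
            (‖m s‖₊ : ℝ≥0∞)^(2:ℝ) * ENNReal.ofReal ((π - s) ^ (-(1:ℝ)/2))) ^ ((1:ℝ)/2)
        * (∫⁻ s in Set.Ioo 0 t, ENNReal.ofReal ((π - s) ^ (-(3:ℝ)/2))) ^ ((1:ℝ)/2) := by
  obtain ⟨ht0, htπ⟩ := ht
  set f : ℝ → ℝ≥0∞ := fun s => (‖m s‖₊ : ℝ≥0∞) * ENNReal.ofReal ((π - s) ^ (-(1:ℝ)/4)) with hf
  set g : ℝ → ℝ≥0∞ := fun s => ENNReal.ofReal ((π - s) ^ (-(3:ℝ)/4)) with hg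
  have hfm : AEMeasurable f (volume.restrict (Set.Ioo 0 t)) := by
    exact (hm.enorm.mul (((measurable_const.sub measurable_id).pow measurable_const).ennreal_ofReal)).aemeasurable
  have hgm : AEMeasurable g (volume.restrict (Set.Ioo 0 t)) := by
    exact (((measurable_const.sub measurable_id).pow measurable_const).ennreal_ofReal).aemeasurable
  have hconj : Real.HolderConjugate 2 2 := Real.HolderConjugate.two_two
  have h := ENNReal.lintegral_mul_le_Lp_mul_Lq (volume.restrict (Set.Ioo 0 t)) hconj hfm hgm
  have hL : ∫⁻ s in Set.Ioo 0 t, (f * g) s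
      = ∫⁻ s in Set.Ioo 0 t, (‖m s‖₊ : ℝ≥0∞) * ENNReal.ofReal ((π - s)⁻¹) := by
    refine setLIntegral_congr_fun measurableSet_Ioo (fun s hs => ?_)
    have ha : (0:ℝ) < π - s := by linarith [hs.2]
    simp only [Pi.mul_apply, hf, hg]
    rw [mul_assoc, ← ENNReal.ofReal_mul (Real.rpow_nonneg ha.le _),
      ← Real.rpow_add ha]
    norm_num
    rw [Real.rpow_neg_one]
  have hP : ∫⁻ s in Set.Ioo 0 t, f s ^ (2:ℝ)
      = ∫⁻ s in Set.Ioo 0 t, (‖m s‖₊ : ℝ≥0∞)^(2:ℝ) * ENNReal.ofReal ((π - s) ^ (-(1:ℝ)/2)) := by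
    refine setLIntegral_congr_fun measurableSet_Ioo (fun s hs => ?_)
    have ha : (0:ℝ) < π - s := by linarith [hs.2]
    simp only [hf]
    rw [ENNReal.mul_rpow_of_nonneg _ _ (by norm_num : (0:ℝ) ≤ 2),
      ENNReal.ofReal_rpow_of_nonneg (Real.rpow_nonneg ha.le _) (by norm_num),
      ← Real.rpow_mul ha.le]
    norm_num
  have hQ : ∫⁻ s in Set.Ioo 0 t, g s ^ (2:ℝ)
      = ∫⁻ s in Set.Ioo 0 t, ENNReal.ofReal ((π - s) ^ (-(3:ℝ)/2)) := by
    refine setLIntegral_congr_fun measurableSet_Ioo (fun s hs => ?_)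
    have ha : (0:ℝ) < π - s := by linarith [hs.2]
    simp only [hg]
    rw [ENNReal.ofReal_rpow_of_nonneg (Real.rpow_nonneg ha.le _) (by norm_num),
      ← Real.rpow_mul ha.le]
    norm_num
  rw [hL, hP, hQ] at h
  exact h

lemma core_bound (m ψ : ℝ → ℂ) (hm : Measurable m) (hψ : Measurable ψ) (C : ℝ) (hC : 0 ≤ C)
    (hψC : ∀ x, ‖ψ x‖ ≤ C) :
    ∫⁻ t in Set.Ioo 0 π,
        (‖∫ ξ in (0:ℝ)..t, m (t-ξ) / ((π:ℂ) - ((t:ℝ)-ξ)) * ψ ξ‖₊ : ℝ≥0∞) ^ (2:ℝ)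
      ≤ (ENNReal.ofReal (2*C)) ^ (2:ℝ) * ∫⁻ s in Set.Ioo 0 π, (‖m s‖₊ : ℝ≥0∞) ^ (2:ℝ) := by
  set V : ℝ → ℝ≥0∞ := fun s => (‖m s‖₊ : ℝ≥0∞) ^ (2:ℝ) * ENNReal.ofReal ((π - s) ^ (-(1:ℝ)/2))
    with hV
  set W : ℝ → ℝ≥0∞ := fun t => ENNReal.ofReal (2 * (π - t) ^ (-(1:ℝ)/2)) with hW
  have hVmeas : Measurable V :=
    (hm.enorm.pow measurable_const).mul
      (((measurable_const.sub measurable_id).pow measurable_const).ennreal_ofReal)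
  have hWmeas : Measurable W :=
    (measurable_const.mul ((measurable_const.sub measurable_id).pow measurable_const)).ennreal_ofReal
  have hVne : ∀ s, V s ≠ ⊤ := fun s =>
    ENNReal.mul_ne_top (ENNReal.rpow_ne_top_of_nonneg (by norm_num) ENNReal.coe_ne_top)
      ENNReal.ofReal_ne_top
  have hWne : ∀ t, W t ≠ ⊤ := fun t => ENNReal.ofReal_ne_top
  -- pointwise bound
  have step1 : ∀ t ∈ Set.Ioo 0 π,
      (‖∫ ξ in (0:ℝ)..t, m (t-ξ) / ((π:ℂ) - ((t:ℝ)-ξ)) * ψ ξ‖₊ : ℝ≥0∞) ^ (2:ℝ)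
        ≤ (ENNReal.ofReal C) ^ (2:ℝ) * (W t * ∫⁻ s in Set.Ioo 0 t, V s) := by
    intro t ht
    have h1 := F_pointwise m ψ C hC hψC ht
    have h2 := CS_step m hm ht
    have h3 := Q_bound ht
    have h4 : (‖∫ ξ in (0:ℝ)..t, m (t-ξ) / ((π:ℂ) - ((t:ℝ)-ξ)) * ψ ξ‖₊ : ℝ≥0∞)
        ≤ ENNReal.ofReal C * ((∫⁻ s in Set.Ioo 0 t, V s) ^ ((1:ℝ)/2) * W t ^ ((1:ℝ)/2)) := by
      refine le_trans h1 (mul_le_mul_right (le_trans h2 ?_) _)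
      exact mul_le_mul_right (ENNReal.rpow_le_rpow h3 (by norm_num)) _
    calc (‖∫ ξ in (0:ℝ)..t, m (t-ξ) / ((π:ℂ) - ((t:ℝ)-ξ)) * ψ ξ‖₊ : ℝ≥0∞) ^ (2:ℝ)
        ≤ (ENNReal.ofReal C * ((∫⁻ s in Set.Ioo 0 t, V s) ^ ((1:ℝ)/2) * W t ^ ((1:ℝ)/2))) ^ (2:ℝ) :=
          ENNReal.rpow_le_rpow h4 (by norm_num)
      _ = (ENNReal.ofReal C) ^ (2:ℝ) * (W t * ∫⁻ s in Set.Ioo 0 t, V s) := by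
          rw [ENNReal.mul_rpow_of_nonneg _ _ (by norm_num : (0:ℝ) ≤ 2),
            ENNReal.mul_rpow_of_nonneg _ _ (by norm_num : (0:ℝ) ≤ 2),
            ← ENNReal.rpow_mul, ← ENNReal.rpow_mul]
          norm_num [mul_comm]
  -- integrate
  have step2 : ∫⁻ t in Set.Ioo 0 π,
      (‖∫ ξ in (0:ℝ)..t, m (t-ξ) / ((π:ℂ) - ((t:ℝ)-ξ)) * ψ ξ‖₊ : ℝ≥0∞) ^ (2:ℝ)
      ≤ (ENNReal.ofReal C) ^ (2:ℝ) * ∫⁻ t in Set.Ioo 0 π, W t * ∫⁻ s in Set.Ioo 0 t, V s := by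
    rw [← lintegral_const_mul' _ _ (ENNReal.rpow_ne_top_of_nonneg (by norm_num) ENNReal.ofReal_ne_top)]
    exact lintegral_mono_ae ((ae_restrict_mem measurableSet_Ioo).mono fun t ht => step1 t ht)
  -- Tonelli and inner integral
  have step3 : ∫⁻ t in Set.Ioo 0 π, W t * ∫⁻ s in Set.Ioo 0 t, V s
      ≤ ENNReal.ofReal 4 * ∫⁻ s in Set.Ioo 0 π, (‖m s‖₊ : ℝ≥0∞) ^ (2:ℝ) := by
    rw [tonelli_block W V hWmeas hVmeas hWne hVne]
    have heq : ∫⁻ s in Set.Ioo 0 π, V s * ∫⁻ t in Set.Ioo s π, W t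
        = ∫⁻ s in Set.Ioo 0 π, (‖m s‖₊ : ℝ≥0∞) ^ (2:ℝ) * ENNReal.ofReal 4 := by
      refine setLIntegral_congr_fun measurableSet_Ioo (fun s hs => ?_)
      rw [W_int hs]
      have ha : (0:ℝ) < π - s := by linarith [hs.2]
      simp only [hV]
      rw [mul_assoc, ← ENNReal.ofReal_mul (Real.rpow_nonneg ha.le _)]
      congr 2
      rw [show (π - s) ^ (-(1:ℝ)/2) * (4 * (π - s) ^ ((1:ℝ)/2))
          = 4 * ((π - s) ^ (-(1:ℝ)/2) * (π - s) ^ ((1:ℝ)/2)) by ring,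
        ← Real.rpow_add ha]
      norm_num
    rw [heq, lintegral_mul_const' _ _ ENNReal.ofReal_ne_top, mul_comm]
  refine le_trans step2 (le_trans (mul_le_mul_right step3 _) (le_of_eq ?_))
  rw [← mul_assoc]
  congr 1
  have h2 : (ENNReal.ofReal 2) ^ (2:ℝ) = ENNReal.ofReal 4 := by
    rw [ENNReal.ofReal_rpow_of_nonneg (by norm_num) (by norm_num)]
    norm_num
  rw [ENNReal.ofReal_mul (by norm_num : (0:ℝ) ≤ 2),
    ENNReal.mul_rpow_of_nonneg _ _ (by norm_num : (0:ℝ) ≤ 2), h2]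
  ring

theorem convolution_L2_bound (φ M₀ : ℝ → ℂ)
    (hφ : ContinuousOn φ (Set.Icc 0 π))
    (hM₀ : MemLp M₀ 2 (volume.restrict (Set.Ioo (0 : ℝ) π))) :
    MemLp (fun t => ∫ ξ in (0 : ℝ)..t, (M₀ (t - ξ) / ((π : ℂ) - ((t : ℝ) - ξ))) * φ ξ) 2
        (volume.restrict (Set.Ioo (0 : ℝ) π)) ∧
      (eLpNorm (fun t => ∫ ξ in (0 : ℝ)..t, (M₀ (t - ξ) / ((π : ℂ) - ((t : ℝ) - ξ))) * φ ξ) 2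
          (volume.restrict (Set.Ioo (0 : ℝ) π))).toReal
        ≤ 2 * (⨆ x ∈ Set.Icc (0 : ℝ) π, ‖φ x‖) *
            (eLpNorm M₀ 2 (volume.restrict (Set.Ioo (0 : ℝ) π))).toReal := by
  have hπ : (0:ℝ) < π := pi_pos
  set μ := volume.restrict (Set.Ioo (0 : ℝ) π) with hμ
  set C := ⨆ x ∈ Set.Icc (0 : ℝ) π, ‖φ x‖ with hCdef
  -- C bounds
  obtain ⟨B, hB⟩ := (isCompact_Icc.image_of_continuousOn hφ.norm).bddAbove
  simp only [mem_upperBounds, Set.mem_image] at hB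
  have hB' : ∀ x ∈ Set.Icc (0:ℝ) π, ‖φ x‖ ≤ B := fun x hx => hB _ ⟨x, hx, rfl⟩
  have hbdd : BddAbove (Set.range fun x => ⨆ _ : x ∈ Set.Icc (0:ℝ) π, ‖φ x‖) := by
    refine ⟨max B 0, ?_⟩
    rintro _ ⟨x, rfl⟩
    by_cases hx : x ∈ Set.Icc (0:ℝ) π
    · simp only [ciSup_pos hx]; exact le_max_of_le_left (hB' x hx)
    · simp [hx]
  have hCb : ∀ x ∈ Set.Icc (0:ℝ) π, ‖φ x‖ ≤ C := by
    intro x hx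
    refine le_trans (le_of_eq ?_) (le_ciSup hbdd x)
    simp only [ciSup_pos hx]
  have hC0 : 0 ≤ C := le_trans (norm_nonneg (φ 0)) (hCb 0 (by constructor <;> [rfl; exact hπ.le]))
  -- measurable versions
  have hφae : AEStronglyMeasurable φ μ :=
    (hφ.mono Set.Ioo_subset_Icc_self).aestronglyMeasurable measurableSet_Ioo
  set ψ₀ := hφae.mk φ with hψ₀def
  have hψ₀ : StronglyMeasurable ψ₀ := hφae.stronglyMeasurable_mk
  have hφψ₀ : φ =ᵐ[μ] ψ₀ := hφae.ae_eq_mk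
  set ψ : ℝ → ℂ := Set.indicator {x | ‖ψ₀ x‖ ≤ C} ψ₀ with hψdef
  have hsetm : MeasurableSet {x : ℝ | ‖ψ₀ x‖ ≤ C} :=
    measurableSet_le hψ₀.norm.measurable measurable_const
  have hψSM : StronglyMeasurable ψ := hψ₀.indicator hsetm
  have hψC : ∀ x, ‖ψ x‖ ≤ C := by
    intro x
    by_cases h : x ∈ {x : ℝ | ‖ψ₀ x‖ ≤ C}
    · rw [hψdef, Set.indicator_of_mem h]; exact h
    · rw [hψdef, Set.indicator_of_notMem h]; simpa using hC0
  have hφψ : φ =ᵐ[μ] ψ := by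
    filter_upwards [hφψ₀, ae_restrict_mem measurableSet_Ioo] with x h1 h2
    have hmemset : x ∈ {x : ℝ | ‖ψ₀ x‖ ≤ C} := by
      simp only [Set.mem_setOf_eq, ← h1]
      exact hCb x (Set.Ioo_subset_Icc_self h2)
    rw [hψdef, Set.indicator_of_mem hmemset, ← h1]
  -- measurable version of M₀
  set g₀ := hM₀.1.mk M₀ with hg₀def
  have hg₀ : StronglyMeasurable g₀ := hM₀.1.stronglyMeasurable_mk
  have hMg : M₀ =ᵐ[μ] g₀ := hM₀.1.ae_eq_mk
  set m : ℝ → ℂ := (Set.Ioo 0 π).indicator g₀ with hmdef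
  have hmSM : StronglyMeasurable m := hg₀.indicator measurableSet_Ioo
  have hMm : M₀ =ᵐ[μ] m := by
    filter_upwards [hMg, ae_restrict_mem measurableSet_Ioo] with x h1 h2
    rw [hmdef, Set.indicator_of_mem h2, ← h1]
  -- F equality on Ioo
  have hFeq : ∀ t ∈ Set.Ioo (0:ℝ) π,
      (∫ ξ in (0:ℝ)..t, (M₀ (t - ξ) / ((π : ℂ) - ((t : ℝ) - ξ))) * φ ξ)
        = ∫ ξ in (0:ℝ)..t, m (t - ξ) / ((π : ℂ) - ((t : ℝ) - ξ)) * ψ ξ := by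
    intro t ht
    apply intervalIntegral.integral_congr_ae
    have e1 : ∀ᵐ ξ ∂(volume : Measure ℝ), ξ ∈ Set.Ioo (0:ℝ) π → φ ξ = ψ ξ :=
      (ae_restrict_iff' measurableSet_Ioo).mp hφψ
    have e2 : ∀ᵐ x ∂(volume : Measure ℝ), x ∈ Set.Ioo (0:ℝ) π → M₀ x = m x :=
      (ae_restrict_iff' measurableSet_Ioo).mp hMm
    have e2' : ∀ᵐ ξ ∂(volume : Measure ℝ), (t - ξ) ∈ Set.Ioo (0:ℝ) π → M₀ (t-ξ) = m (t-ξ) :=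
      (Measure.measurePreserving_sub_left volume t).quasiMeasurePreserving.ae e2
    have e3 : ∀ᵐ ξ ∂(volume : Measure ℝ), ξ ≠ t := by
      rw [ae_iff]
      have : {a : ℝ | ¬ a ≠ t} = {t} := by ext a; simp
      rw [this]
      exact measure_singleton t
    filter_upwards [e1, e2', e3] with ξ h1 h2 h3 hmem
    rw [Set.uIoc_of_le ht.1.le] at hmem
    have hξI : ξ ∈ Set.Ioo (0:ℝ) π := ⟨hmem.1, lt_of_le_of_lt hmem.2 ht.2⟩
    have hlt : ξ < t := lt_of_le_of_ne hmem.2 h3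
    have htξ : t - ξ ∈ Set.Ioo (0:ℝ) π := ⟨by linarith, by linarith [ht.2, hmem.1]⟩
    rw [h1 hξI, h2 htξ]
  have hF : (fun t => ∫ ξ in (0:ℝ)..t, (M₀ (t - ξ) / ((π : ℂ) - ((t : ℝ) - ξ))) * φ ξ)
      =ᵐ[μ] (fun t => ∫ ξ in (0:ℝ)..t, m (t - ξ) / ((π : ℂ) - ((t : ℝ) - ξ)) * ψ ξ) :=
    (ae_restrict_mem measurableSet_Ioo).mono fun t ht => hFeq t ht
  -- core facts
  have hmeasF := F_meas m ψ hmSM.measurable hψSM.measurable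
  have hbound := core_bound m ψ hmSM.measurable hψSM.measurable C hC0 hψC
  -- eLpNorm computations
  have h2ne0 : (2 : ℝ≥0∞) ≠ 0 := by norm_num
  have h2net : (2 : ℝ≥0∞) ≠ ⊤ := by norm_num
  have htr : (2 : ℝ≥0∞).toReal = (2:ℝ) := by simp
  have hsnm : eLpNorm m 2 μ = eLpNorm M₀ 2 μ := eLpNorm_congr_ae hMm.symm
  have hsnm_lt : eLpNorm m 2 μ < ⊤ := hsnm ▸ hM₀.2
  have hkey : eLpNorm (fun t => ∫ ξ in (0:ℝ)..t, m (t - ξ) / ((π : ℂ) - ((t : ℝ) - ξ)) * ψ ξ) 2 μ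
      ≤ ENNReal.ofReal (2 * C) * eLpNorm m 2 μ := by
    rw [eLpNorm_eq_lintegral_rpow_enorm_toReal h2ne0 h2net,
      eLpNorm_eq_lintegral_rpow_enorm_toReal h2ne0 h2net, htr]
    calc (∫⁻ t, (‖∫ ξ in (0:ℝ)..t, m (t - ξ) / ((π : ℂ) - ((t : ℝ) - ξ)) * ψ ξ‖₊ : ℝ≥0∞) ^ (2:ℝ) ∂μ) ^ ((1:ℝ)/2)
        ≤ ((ENNReal.ofReal (2*C)) ^ (2:ℝ) * ∫⁻ s, (‖m s‖₊ : ℝ≥0∞) ^ (2:ℝ) ∂μ) ^ ((1:ℝ)/2) :=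
          ENNReal.rpow_le_rpow hbound (by norm_num)
      _ = ENNReal.ofReal (2 * C) * (∫⁻ s, (‖m s‖₊ : ℝ≥0∞) ^ (2:ℝ) ∂μ) ^ ((1:ℝ)/2) := by
          rw [ENNReal.mul_rpow_of_nonneg _ _ (by norm_num : (0:ℝ) ≤ 1/2),
            ← ENNReal.rpow_mul]
          norm_num
  have hlt : eLpNorm (fun t => ∫ ξ in (0:ℝ)..t, m (t - ξ) / ((π : ℂ) - ((t : ℝ) - ξ)) * ψ ξ) 2 μ < ⊤ :=
    lt_of_le_of_lt hkey (ENNReal.mul_lt_top ENNReal.ofReal_lt_top hsnm_lt)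
  have hFnorm : eLpNorm (fun t => ∫ ξ in (0:ℝ)..t, (M₀ (t - ξ) / ((π : ℂ) - ((t : ℝ) - ξ))) * φ ξ) 2 μ
      = eLpNorm (fun t => ∫ ξ in (0:ℝ)..t, m (t - ξ) / ((π : ℂ) - ((t : ℝ) - ξ)) * ψ ξ) 2 μ :=
    eLpNorm_congr_ae hF
  constructor
  · exact ⟨hmeasF.congr hF.symm, by rw [hFnorm]; exact hlt⟩
  · rw [hFnorm]
    have hne : ENNReal.ofReal (2 * C) * eLpNorm m 2 μ ≠ ⊤ :=
      (ENNReal.mul_lt_top ENNReal.ofReal_lt_top hsnm_lt).ne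
    refine le_trans (ENNReal.toReal_mono hne hkey) ?_
    rw [ENNReal.toReal_mul, ENNReal.toReal_ofReal (by positivity), hsnm, mul_assoc]
end

section
/- For every real r with 0 < r ≤ 1/2 and every integer k, the minimum of |cos(ρπ)| over the circle |ρ − (k − 1/2)| = r equals the minimum of |sin(ρπ)| over the circle |ρ − k| = r, and hence is bounded below by πr·(1 − 10π²r²/(3(20 − π²r²))). -/
open Real

private lemma fact_ge : ∀ n : ℕ, 6 * 20 ^ n ≤ (2 * n + 3).factorial := by
  intro n
  induction n with
  | zero => simp [Nat.factorial]
  | succ n ih =>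
    have h : (2 * (n + 1) + 3).factorial = (2 * n + 5) * ((2 * n + 4) * (2 * n + 3).factorial) := by
      rw [show 2 * (n + 1) + 3 = (2 * n + 3) + 1 + 1 from by ring, Nat.factorial_succ,
        Nat.factorial_succ]
    rw [h]
    calc 6 * 20 ^ (n + 1) = 20 * (6 * 20 ^ n) := by ring
    _ ≤ 20 * (2 * n + 3).factorial := by
        exact Nat.mul_le_mul_left _ ih
    _ ≤ (2 * n + 5) * ((2 * n + 4) * (2 * n + 3).factorial) := by
        have h4 : 4 ≤ 2 * n + 4 := by omega
        have h5 : 5 ≤ 2 * n + 5 := by omega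
        calc 20 * (2 * n + 3).factorial = 5 * (4 * (2 * n + 3).factorial) := by ring
        _ ≤ (2 * n + 5) * ((2 * n + 4) * (2 * n + 3).factorial) := by
            exact Nat.mul_le_mul h5 (Nat.mul_le_mul_right _ h4)

private lemma sin_lower (w : ℂ) (hw : ‖w‖ ≤ 2) :
    ‖w‖ - ‖w‖ ^ 3 * (10 / (3 * (20 - ‖w‖ ^ 2))) ≤ ‖Complex.sin w‖ := by
  set a := ‖w‖ with ha
  have ha0 : 0 ≤ a := norm_nonneg w
  have hden : (0:ℝ) < 20 - a ^ 2 := by nlinarith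
  -- tail of the sine series
  set f : ℕ → ℂ := fun n => (-1) ^ n * w ^ (2 * n + 1) / ↑(2 * n + 1).factorial with hf
  have hsum : HasSum f (Complex.sin w) := Complex.hasSum_sin w
  have hf0 : f 0 = w := by simp [hf]
  have htail : HasSum (fun n => f (n + 1)) (Complex.sin w - w) := by
    have := (hasSum_nat_add_iff' (f := f) 1).mpr hsum
    simpa [hf0] using this
  have hnorm : ∀ n : ℕ, ‖f (n + 1)‖ ≤ (a ^ 3 / 6) * (a ^ 2 / 20) ^ n := by
    intro n
    have h1 : ‖f (n + 1)‖ = a ^ (2 * n + 3) / (2 * n + 3).factorial := by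
      have h2 : 2 * (n + 1) + 1 = 2 * n + 3 := by ring
      simp [hf, h2, norm_div, norm_mul, norm_pow, Complex.norm_natCast, ha]
    rw [h1]
    have hfac : (6 : ℝ) * 20 ^ n ≤ ((2 * n + 3).factorial : ℝ) := by
      exact_mod_cast fact_ge n
    have hpos : (0:ℝ) < 6 * 20 ^ n := by positivity
    have hnum : a ^ (2 * n + 3) = a ^ 3 * (a ^ 2) ^ n := by
      rw [← pow_mul, ← pow_add]; ring_nf
    calc a ^ (2 * n + 3) / (2 * n + 3).factorial
        ≤ a ^ (2 * n + 3) / (6 * 20 ^ n) := by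
          apply div_le_div_of_nonneg_left (by positivity) hpos hfac
    _ = (a ^ 3 / 6) * (a ^ 2 / 20) ^ n := by
        rw [hnum, div_pow]; ring
  have hq0 : (0:ℝ) ≤ a ^ 2 / 20 := by positivity
  have hq1 : a ^ 2 / 20 < 1 := by nlinarith
  have hgeom : Summable (fun n : ℕ => (a ^ 3 / 6) * (a ^ 2 / 20) ^ n) :=
    (summable_geometric_of_lt_one hq0 hq1).mul_left _
  have hsummable : Summable (fun n : ℕ => ‖f (n + 1)‖) :=
    Summable.of_nonneg_of_le (fun n => norm_nonneg _) hnorm hgeom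
  have hbound : ‖Complex.sin w - w‖ ≤ a ^ 3 * (10 / (3 * (20 - a ^ 2))) := by
    rw [← htail.tsum_eq]
    calc ‖∑' n, f (n + 1)‖ ≤ ∑' n, ‖f (n + 1)‖ := norm_tsum_le_tsum_norm hsummable
    _ ≤ ∑' n : ℕ, (a ^ 3 / 6) * (a ^ 2 / 20) ^ n :=
        Summable.tsum_le_tsum hnorm hsummable hgeom
    _ = (a ^ 3 / 6) * (1 - a ^ 2 / 20)⁻¹ := by
        rw [tsum_mul_left, tsum_geometric_of_lt_one hq0 hq1]
    _ = a ^ 3 * (10 / (3 * (20 - a ^ 2))) := by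
        field_simp
        ring
  have h2 := norm_sub_norm_le w (w - Complex.sin w)
  simp only [sub_sub_cancel] at h2
  rw [norm_sub_rev w (Complex.sin w)] at h2
  linarith [hbound, h2]

theorem cos_lower_bound_on_circle (r : ℝ) (hr0 : 0 < r) (hr : r ≤ 1 / 2) (k : ℤ) :
    sInf ((fun ρ : ℂ => ‖Complex.cos (ρ * π)‖) '' {ρ : ℂ | ‖ρ - ((k : ℂ) - 1 / 2)‖ = r})
        = sInf ((fun ρ : ℂ => ‖Complex.sin (ρ * π)‖) '' {ρ : ℂ | ‖ρ - (k : ℂ)‖ = r}) ∧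
      π * r * (1 - 10 * π ^ 2 * r ^ 2 / (3 * (20 - π ^ 2 * r ^ 2)))
        ≤ sInf ((fun ρ : ℂ => ‖Complex.cos (ρ * π)‖) '' {ρ : ℂ | ‖ρ - ((k : ℂ) - 1 / 2)‖ = r}) := by
  have himg : (fun ρ : ℂ => ‖Complex.cos (ρ * π)‖) '' {ρ : ℂ | ‖ρ - ((k : ℂ) - 1 / 2)‖ = r}
      = (fun ρ : ℂ => ‖Complex.sin (ρ * π)‖) '' {ρ : ℂ | ‖ρ - (k : ℂ)‖ = r} := by
    ext x
    constructor
    · rintro ⟨ρ, hρ, rfl⟩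
      refine ⟨ρ + 1 / 2, ?_, ?_⟩
      · show ‖ρ + 1 / 2 - (k : ℂ)‖ = r
        have : ρ + 1 / 2 - (k : ℂ) = ρ - ((k : ℂ) - 1 / 2) := by ring
        rw [this]; exact hρ
      · show ‖Complex.sin ((ρ + 1 / 2) * π)‖ = ‖Complex.cos (ρ * π)‖
        have : (ρ + 1 / 2) * (π : ℂ) = ρ * π + π / 2 := by ring
        rw [this, Complex.sin_add_pi_div_two]
    · rintro ⟨ρ, hρ, rfl⟩
      refine ⟨ρ - 1 / 2, ?_, ?_⟩
      · show ‖ρ - 1 / 2 - ((k : ℂ) - 1 / 2)‖ = r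
        have : ρ - 1 / 2 - ((k : ℂ) - 1 / 2) = ρ - (k : ℂ) := by ring
        rw [this]; exact hρ
      · show ‖Complex.cos ((ρ - 1 / 2) * π)‖ = ‖Complex.sin (ρ * π)‖
        have : (ρ - 1 / 2) * (π : ℂ) = ρ * π - π / 2 := by ring
        rw [this, Complex.cos_sub_pi_div_two]
  refine ⟨by rw [himg], ?_⟩
  rw [himg]
  have hπ4 : π ≤ 4 := by linarith [Real.pi_le_four]
  have hπ0 : 0 < π := Real.pi_pos
  apply le_csInf
  · exact ⟨‖Complex.sin (((k : ℂ) + r) * π)‖, ⟨(k : ℂ) + r, by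
      simp only [Set.mem_setOf_eq, add_sub_cancel_left]
      rw [Complex.norm_real]
      exact abs_of_pos hr0, rfl⟩⟩
  · rintro x ⟨ρ, hρ, rfl⟩
    simp only [Set.mem_setOf_eq] at hρ
    show π * r * (1 - 10 * π ^ 2 * r ^ 2 / (3 * (20 - π ^ 2 * r ^ 2))) ≤ ‖Complex.sin (ρ * π)‖
    set z := ρ - (k : ℂ) with hz
    have hsin : ‖Complex.sin (ρ * π)‖ = ‖Complex.sin (z * π)‖ := by
      have hρeq : ρ * (π : ℂ) = z * π + (k : ℂ) * π := by rw [hz]; ring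
      rw [hρeq, Complex.sin_add, Complex.sin_int_mul_pi, mul_zero, add_zero, norm_mul]
      have : Complex.cos ((k : ℂ) * π) = ((Real.cos ((k : ℝ) * π) : ℝ) : ℂ) := by
        push_cast [Complex.ofReal_cos]; ring_nf
      rw [this, Complex.norm_real, Real.norm_eq_abs]
      have : |Real.cos ((k : ℝ) * π)| = 1 := Real.abs_cos_int_mul_pi k
      rw [this, mul_one]
    rw [hsin]
    have hwnorm : ‖z * (π : ℂ)‖ = r * π := by
      rw [norm_mul, hρ, Complex.norm_real, Real.norm_eq_abs, abs_of_pos hπ0]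
    have hsq : π ^ 2 * r ^ 2 ≤ 4 := by
      have h1 : π ^ 2 ≤ 16 := by nlinarith
      have h2 : r ^ 2 ≤ 1 / 4 := by nlinarith
      calc π ^ 2 * r ^ 2 ≤ 16 * (1 / 4) := by
            apply mul_le_mul h1 h2 (by positivity) (by norm_num)
      _ = 4 := by norm_num
    have hw2 : ‖z * (π : ℂ)‖ ≤ 2 := by rw [hwnorm]; nlinarith
    have := sin_lower (z * π) hw2
    rw [hwnorm] at this
    have heq : π * r * (1 - 10 * π ^ 2 * r ^ 2 / (3 * (20 - π ^ 2 * r ^ 2)))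
        = r * π - (r * π) ^ 3 * (10 / (3 * (20 - (r * π) ^ 2))) := by
      have hden : (0:ℝ) < 20 - π ^ 2 * r ^ 2 := by nlinarith [hsq]
      have hden' : (0:ℝ) < 20 - (r * π) ^ 2 := by nlinarith [hsq]
      field_simp
    rw [heq]
    exact this
end
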